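/- Let f : [0,∞) → 𝕂ⁿ be continuous and define x : [-r,∞) → 𝕂ⁿ by x = 0 on [-r,0) and x(t) = ∫_0^t X^L(t-u) f(u) du for t ≥ 0. Then x is continuous on [0,∞) and x(t) = L(∫_0^t x_s ds) + ∫_0^t f(u) du for all t ≥ 0; that is, x is the unique solution with zero initial datum of the non-homogeneous integral equation with forcing term Vf. -/

import Mathlib

open MeasureTheory

/-- `X` is the principal fundamental matrix solution of `ẋ(t) = L x_t`:
`X = O` on `[-r,0)`, `X` continuous on `[0,∞)`, `X(0) = I`, and for every `ξ` and
`t ≥ 0`, `X(t)ξ = ξ + L(θ ↦ ∫_0^{max(t+θ,0)} X(s)ξ ds)`. -/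
def IsPFMS {𝕜 : Type*} [RCLike 𝕜] {n : ℕ} (r : ℝ)
    (L : C(Set.Icc (-r) (0:ℝ), Fin n → 𝕜) →L[𝕜] (Fin n → 𝕜))
    (X : ℝ → ((Fin n → 𝕜) →L[𝕜] (Fin n → 𝕜))) : Prop :=
  (∀ t ∈ Set.Ico (-r) (0:ℝ), X t = 0) ∧
  ContinuousOn X (Set.Ici (0:ℝ)) ∧ X 0 = 1 ∧
  ∀ ξ : Fin n → 𝕜, ∀ t, 0 ≤ t → ∃ ψ : C(Set.Icc (-r) (0:ℝ), Fin n → 𝕜),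
    (∀ θ : Set.Icc (-r) (0:ℝ), ψ θ = ∫ s in (0:ℝ)..(max (t + (θ : ℝ)) 0), X s ξ) ∧
    X t ξ = ξ + L ψ

/-- `IsSolForced r L φ ξ G x` : `x` solves `x(t) = ξ + L(∫_0^t x_s ds) + G(t)` for
`t ≥ 0`, with history `φ` on `[-r,0)` and value `ξ` at `0`. -/
def IsSolForced {𝕜 : Type*} [RCLike 𝕜] {n : ℕ} (r : ℝ)
    (L : C(Set.Icc (-r) (0:ℝ), Fin n → 𝕜) →L[𝕜] (Fin n → 𝕜))
    (φ : ℝ → Fin n → 𝕜) (ξ : Fin n → 𝕜) (G : ℝ → Fin n → 𝕜)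
    (x : ℝ → Fin n → 𝕜) : Prop :=
  (∀ θ ∈ Set.Ico (-r) (0:ℝ), x θ = φ θ) ∧ x 0 = ξ ∧
  ContinuousOn x (Set.Ici (0:ℝ)) ∧
  ∀ t, 0 ≤ t → ∃ ψ : C(Set.Icc (-r) (0:ℝ), Fin n → 𝕜),
    (∀ θ : Set.Icc (-r) (0:ℝ), ψ θ = ∫ s in (θ : ℝ)..(t + (θ : ℝ)), x s) ∧
    x t = ξ + L ψ + G t

section Aux

variable {𝕜 : Type*} [RCLike 𝕜] {n : ℕ}

private lemma aux_vanish_integrable {r : ℝ}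
    {z : ℝ → Fin n → 𝕜} (hz0 : ∀ s ∈ Set.Icc (-r) (0:ℝ), z s = 0)
    (hzc : ContinuousOn z (Set.Ici (0:ℝ))) :
    ∀ a b : ℝ, -r ≤ a → a ≤ b → IntervalIntegrable z volume a b := by
  have key1 : ∀ a b : ℝ, -r ≤ a → a ≤ b → b ≤ 0 → IntervalIntegrable z volume a b := by
    intro a b ha hab hb
    rw [intervalIntegrable_iff_integrableOn_Ioc_of_le hab]
    exact (integrableOn_zero).congr_fun
      (fun s hs => (hz0 s ⟨ha.trans hs.1.le, hs.2.trans hb⟩).symm) measurableSet_Ioc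
  have key2 : ∀ a b : ℝ, 0 ≤ a → a ≤ b → IntervalIntegrable z volume a b := by
    intro a b ha hab
    have hzt : Continuous fun s => z (max s 0) :=
      hzc.comp_continuous (continuous_id.max continuous_const) fun s => Set.mem_Ici.mpr (le_max_right _ _)
    rw [intervalIntegrable_iff_integrableOn_Ioc_of_le hab]
    exact (hzt.integrableOn_Ioc).congr_fun
      (fun s hs => by dsimp only; rw [max_eq_left (ha.trans hs.1.le)]) measurableSet_Ioc
  intro a b ha hab
  rcases le_total b 0 with hb | hb
  · exact key1 a b ha hab hb
  rcases le_total 0 a with ha0 | ha0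
  · exact key2 a b ha0 hab
  · exact (key1 a 0 ha ha0 le_rfl).trans (key2 0 b le_rfl hb)

private lemma aux_vanish_shift {r : ℝ}
    {z : ℝ → Fin n → 𝕜} (hz0 : ∀ s ∈ Set.Icc (-r) (0:ℝ), z s = 0)
    (hzi : ∀ a b : ℝ, -r ≤ a → a ≤ b → IntervalIntegrable z volume a b)
    {θ t : ℝ} (hθ : θ ∈ Set.Icc (-r) (0:ℝ)) (ht : 0 ≤ t) :
    ∫ s in θ..(t+θ), z s = ∫ s in (0:ℝ)..(max (t+θ) 0), z s := by
  have hθb : θ ≤ t + θ := by linarith [hθ.2]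
  rcases le_total (t+θ) 0 with h | h
  · rw [max_eq_right h, intervalIntegral.integral_same]
    have heq : Set.EqOn z (fun _ => (0 : Fin n → 𝕜)) (Set.uIcc θ (t+θ)) := by
      intro s hs
      rw [Set.uIcc_of_le hθb] at hs
      exact hz0 s ⟨hθ.1.trans hs.1, hs.2.trans h⟩
    rw [intervalIntegral.integral_congr heq, intervalIntegral.integral_zero]
  · rw [max_eq_left h]
    rw [← intervalIntegral.integral_add_adjacent_intervals (hzi θ 0 hθ.1 hθ.2)
      (hzi 0 (t+θ) (hθ.1.trans hθ.2) h)]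
    have heq : Set.EqOn z (fun _ => (0 : Fin n → 𝕜)) (Set.uIcc θ 0) := by
      intro s hs
      rw [Set.uIcc_of_le hθ.2] at hs
      exact hz0 s ⟨hθ.1.trans hs.1, hs.2⟩
    rw [intervalIntegral.integral_congr heq, intervalIntegral.integral_zero, zero_add]

private lemma aux_fubini (A : ℝ → ((Fin n → 𝕜) →L[𝕜] (Fin n → 𝕜)))
    (hA : Continuous A) (g : ℝ → Fin n → 𝕜) (hg : Continuous g) {a : ℝ} (ha : 0 ≤ a) :
    ∫ v in (0:ℝ)..a, (∫ u in (0:ℝ)..v, A (v-u) (g u)) =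
      ∫ u in (0:ℝ)..a, (∫ s in (0:ℝ)..(a-u), A s) (g u) := by
  set H : ℝ → ℝ → Fin n → 𝕜 := fun v u => Set.indicator (Set.Ici u) (fun w => A (w - u) (g u)) v
    with hH
  have hcont : Continuous fun p : ℝ × ℝ => A (p.1 - p.2) (g p.2) :=
    (hA.comp (continuous_fst.sub continuous_snd)).clm_apply (hg.comp continuous_snd)
  have hHm : StronglyMeasurable (Function.uncurry H) := by
    have : Function.uncurry H = Set.indicator {p : ℝ × ℝ | p.2 ≤ p.1}
        (fun p => A (p.1 - p.2) (g p.2)) := by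
      ext p i
      simp only [Function.uncurry, hH, Set.indicator_apply, Set.mem_Ici, Set.mem_setOf_eq]
    rw [this]
    exact hcont.stronglyMeasurable.indicator
      (isClosed_le continuous_snd continuous_fst).measurableSet
  obtain ⟨M, hM⟩ : ∃ M, ∀ p : ℝ × ℝ, p ∈ Set.Icc 0 a ×ˢ Set.Icc 0 a →
      ‖A (p.1 - p.2) (g p.2)‖ ≤ M := by
    rcases (isCompact_Icc.prod isCompact_Icc).exists_bound_of_continuousOn
      (hcont.continuousOn (s := Set.Icc 0 a ×ˢ Set.Icc 0 a)) with ⟨M, hM⟩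
    exact ⟨M, hM⟩
  have hint : Integrable (Function.uncurry H)
      ((volume.restrict (Set.Ioc 0 a)).prod (volume.restrict (Set.Ioc 0 a))) := by
    refine Integrable.mono' (integrable_const M) hHm.aestronglyMeasurable ?_
    rw [Measure.prod_restrict]
    filter_upwards [ae_restrict_mem ((measurableSet_Ioc).prod measurableSet_Ioc)] with p hp
    have hp1 : p.1 ∈ Set.Icc 0 a := Set.Ioc_subset_Icc_self hp.1
    have hp2 : p.2 ∈ Set.Icc 0 a := Set.Ioc_subset_Icc_self hp.2
    calc ‖Function.uncurry H p‖ ≤ ‖A (p.1 - p.2) (g p.2)‖ := by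
          simp only [Function.uncurry, hH]
          exact norm_indicator_le_norm_self _ _
      _ ≤ M := hM p ⟨hp1, hp2⟩
  calc ∫ v in (0:ℝ)..a, (∫ u in (0:ℝ)..v, A (v-u) (g u))
      = ∫ v in Set.Ioc (0:ℝ) a, (∫ u in Set.Ioc (0:ℝ) a, H v u) := by
        rw [intervalIntegral.integral_of_le ha]
        refine setIntegral_congr_fun measurableSet_Ioc (fun v hv => ?_)
        rw [intervalIntegral.integral_of_le hv.1.le]
        have : ∫ u in Set.Ioc (0:ℝ) a, H v u =
            ∫ u in Set.Ioc (0:ℝ) a, Set.indicator (Set.Iic v) (fun u => A (v - u) (g u)) u := by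
          refine setIntegral_congr_fun measurableSet_Ioc (fun u hu => ?_)
          simp only [hH, Set.indicator_apply, Set.mem_Ici, Set.mem_Iic]
        rw [this, setIntegral_indicator measurableSet_Iic]
        have hset : Set.Ioc (0:ℝ) a ∩ Set.Iic v = Set.Ioc 0 v := by
          ext u; constructor
          · rintro ⟨h1, h2⟩; exact ⟨h1.1, h2⟩
          · rintro ⟨h1, h2⟩; exact ⟨⟨h1, h2.trans hv.2⟩, h2⟩
        rw [hset]
    _ = ∫ u in Set.Ioc (0:ℝ) a, (∫ v in Set.Ioc (0:ℝ) a, H v u) := integral_integral_swap hint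
    _ = ∫ u in (0:ℝ)..a, (∫ s in (0:ℝ)..(a-u), A s) (g u) := by
        rw [intervalIntegral.integral_of_le ha]
        refine setIntegral_congr_fun measurableSet_Ioc (fun u hu => ?_)
        have hset : Set.Ioc (0:ℝ) a ∩ Set.Ici u = Set.Icc u a := by
          ext v; constructor
          · rintro ⟨h1, h2⟩; exact ⟨h2, h1.2⟩
          · rintro ⟨h1, h2⟩; exact ⟨⟨lt_of_lt_of_le hu.1 h1, h2⟩, h1⟩
        rw [show (fun v => H v u) = Set.indicator (Set.Ici u) (fun w => A (w - u) (g u)) from rfl]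
        rw [setIntegral_indicator measurableSet_Ici, hset, integral_Icc_eq_integral_Ioc,
          ← intervalIntegral.integral_of_le hu.2]
        rw [intervalIntegral.integral_comp_sub_right (fun w => A w (g u)) u, sub_self]
        rw [ContinuousLinearMap.intervalIntegral_apply (hA.intervalIntegrable _ _) (g u)]

end Aux

/-- For continuous `f`, the function `x(t) = ∫_0^t X^L(t-u) f(u) du` (zero on `[-r,0)`)
is the unique solution with zero initial datum of the non-homogeneous integral equation
with forcing term `Vf : t ↦ ∫_0^t f(u) du`. -/
theorem stmt_9 {𝕜 : Type*} [RCLike 𝕜] {n : ℕ} (hn : 0 < n) {r : ℝ} (hr : 0 < r)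
    (L : C(Set.Icc (-r) (0:ℝ), Fin n → 𝕜) →L[𝕜] (Fin n → 𝕜))
    (X : ℝ → ((Fin n → 𝕜) →L[𝕜] (Fin n → 𝕜))) (hX : IsPFMS r L X)
    (f : ℝ → Fin n → 𝕜) (hf : ContinuousOn f (Set.Ici (0:ℝ)))
    (x : ℝ → Fin n → 𝕜)
    (hxneg : ∀ t ∈ Set.Ico (-r) (0:ℝ), x t = 0)
    (hxpos : ∀ t, 0 ≤ t → x t = ∫ u in (0:ℝ)..t, X (t - u) (f u)) :
    IsSolForced r L (fun _ => 0) 0 (fun t => ∫ u in (0:ℝ)..t, f u) x ∧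
      ∀ x' : ℝ → Fin n → 𝕜,
        IsSolForced r L (fun _ => 0) 0 (fun t => ∫ u in (0:ℝ)..t, f u) x' →
        ∀ t, 0 ≤ t → x' t = x t := by
  obtain ⟨hX0, hXc, hX1, hXeq⟩ := hX
  have hx0 : x 0 = 0 := by rw [hxpos 0 le_rfl, intervalIntegral.integral_same]
  have hxIcc : ∀ s ∈ Set.Icc (-r) (0:ℝ), x s = 0 := by
    intro s hs
    rcases lt_or_eq_of_le hs.2 with h | h
    · exact hxneg s ⟨hs.1, h⟩
    · rw [h]; exact hx0
  have hXtc : Continuous fun s => X (max s 0) :=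
    hXc.comp_continuous (continuous_id.max continuous_const) fun s => Set.mem_Ici.mpr (le_max_right _ _)
  have hftc : Continuous fun u => f (max u 0) :=
    hf.comp_continuous (continuous_id.max continuous_const) fun s => Set.mem_Ici.mpr (le_max_right _ _)
  have hxtc : Continuous fun t => ∫ u in (0:ℝ)..t, X (max (t-u) 0) (f (max u 0)) := by
    apply intervalIntegral.continuous_parametric_intervalIntegral_of_continuous (μ := volume)
      (f := fun t u => X (max (t-u) 0) (f (max u 0))) ?_ continuous_id
    exact (hXtc.comp (continuous_fst.sub continuous_snd)).clm_apply (hftc.comp continuous_snd)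
  have hxeq : ∀ s, 0 ≤ s → x s = ∫ u in (0:ℝ)..s, X (max (s-u) 0) (f (max u 0)) := by
    intro s hs
    rw [hxpos s hs]
    refine intervalIntegral.integral_congr fun u hu => ?_
    rw [Set.uIcc_of_le hs] at hu
    rw [max_eq_left (by linarith [hu.1, hu.2] : (0:ℝ) ≤ s - u), max_eq_left hu.1]
  have hxc : ContinuousOn x (Set.Ici (0:ℝ)) := hxtc.continuousOn.congr fun s hs => hxeq s hs
  have hxint := aux_vanish_integrable hxIcc hxc
  have hYc : Continuous fun b => ∫ s in (0:ℝ)..b, X (max s 0) :=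
    intervalIntegral.continuous_parametric_intervalIntegral_of_continuous (μ := volume)
      (f := fun (_ : ℝ) s => X (max s 0)) (hXtc.comp continuous_snd) continuous_id
  have hYapp : ∀ (b : ℝ) (v : Fin n → 𝕜),
      (∫ s in (0:ℝ)..b, X (max s 0)) v = ∫ s in (0:ℝ)..b, X (max s 0) v :=
    fun b v => ContinuousLinearMap.intervalIntegral_apply (hXtc.intervalIntegrable _ _) v
  have hsol : IsSolForced r L (fun _ => 0) 0 (fun t => ∫ u in (0:ℝ)..t, f u) x := by
    refine ⟨fun θ hθ => hxneg θ hθ, hx0, hxc, ?_⟩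
    intro t ht
    have hFc : Continuous fun p : ℝ × (Set.Icc (-r) (0:ℝ)) =>
        (∫ s in (0:ℝ)..(max (t + (p.2 : ℝ) - p.1) 0), X (max s 0)) (f (max p.1 0)) := by
      refine Continuous.clm_apply (hYc.comp ?_) (hftc.comp continuous_fst)
      exact ((continuous_const.add (continuous_subtype_val.comp continuous_snd)).sub
        continuous_fst).max continuous_const
    set Φ : C(ℝ, C(Set.Icc (-r) (0:ℝ), Fin n → 𝕜)) := (ContinuousMap.mk _ hFc).curry with hΦ
    have hΦapp : ∀ (u : ℝ) (θ : Set.Icc (-r) (0:ℝ)),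
        Φ u θ = (∫ s in (0:ℝ)..(max (t + (θ:ℝ) - u) 0), X (max s 0)) (f (max u 0)) :=
      fun u θ => rfl
    have hpoint : ∀ u ∈ Set.Icc (0:ℝ) t, X (max (t - u) 0) (f (max u 0))
        = f (max u 0) + L (Φ u) := by
      intro u hu
      obtain ⟨ψu, hψu1, hψu2⟩ := hXeq (f (max u 0)) (t - u) (by linarith [hu.2])
      have hψuΦ : ψu = Φ u := by
        refine ContinuousMap.ext fun θ => ?_
        rw [hψu1 θ, hΦapp u θ, hYapp]
        have harg : t - u + (θ:ℝ) = t + (θ:ℝ) - u := by ring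
        rw [harg]
        refine intervalIntegral.integral_congr fun s hs => ?_
        rw [Set.uIcc_of_le (le_max_right _ _)] at hs
        rw [max_eq_left hs.1]
      rw [max_eq_left (by linarith [hu.2] : (0:ℝ) ≤ t - u), hψu2, hψuΦ]
    have hψc : Continuous fun θ : Set.Icc (-r) (0:ℝ) =>
        ∫ v in (0:ℝ)..(max (t + (θ:ℝ)) 0),
          (∫ u in (0:ℝ)..v, X (max (v-u) 0) (f (max u 0))) :=
      intervalIntegral.continuous_parametric_intervalIntegral_of_continuous (μ := volume)
        (f := fun (_ : Set.Icc (-r) (0:ℝ)) v =>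
          ∫ u in (0:ℝ)..v, X (max (v-u) 0) (f (max u 0)))
        (hxtc.comp continuous_snd)
        ((continuous_const.add continuous_subtype_val).max continuous_const)
    refine ⟨ContinuousMap.mk _ hψc, fun θ => ?_, ?_⟩
    · show (∫ v in (0:ℝ)..(max (t + (θ:ℝ)) 0),
          ∫ u in (0:ℝ)..v, X (max (v-u) 0) (f (max u 0)))
        = ∫ s in (θ:ℝ)..(t + (θ:ℝ)), x s
      rw [aux_vanish_shift hxIcc hxint θ.2 ht]
      exact (intervalIntegral.integral_congr fun v hv => by
        rw [Set.uIcc_of_le (le_max_right _ _)] at hv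
        exact hxeq v hv.1).symm
    · show x t = 0 + L _ + ∫ u in (0:ℝ)..t, f u
      have hstep1 : x t = (∫ u in (0:ℝ)..t, f (max u 0)) + L (∫ u in (0:ℝ)..t, Φ u) := by
        rw [hxeq t ht]
        rw [intervalIntegral.integral_congr (g := fun u => f (max u 0) + L (Φ u))
          (fun u hu => by rw [Set.uIcc_of_le ht] at hu; exact hpoint u hu)]
        have hLi : IntervalIntegrable (fun u => L (Φ u)) volume 0 t :=
          (L.continuous.comp Φ.continuous).intervalIntegrable _ _
        rw [intervalIntegral.integral_add (hftc.intervalIntegrable _ _) hLi]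
        rw [ContinuousLinearMap.intervalIntegral_comp_comm L
          (Φ.continuous.intervalIntegrable _ _)]
      have hstep2 : (∫ u in (0:ℝ)..t, Φ u) = ContinuousMap.mk _ hψc := by
        refine ContinuousMap.ext fun θ => ?_
        have hc1 : Continuous fun u : ℝ => Φ u θ :=
          hFc.comp (continuous_id.prodMk continuous_const)
        have he : (∫ u in (0:ℝ)..t, Φ u) θ = ∫ u in (0:ℝ)..t, Φ u θ :=
          ((ContinuousMap.evalCLM 𝕜 θ).intervalIntegral_comp_comm
            (Φ.continuous.intervalIntegrable _ _)).symm
        rw [he]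
        show _ = ∫ v in (0:ℝ)..(max (t + (θ:ℝ)) 0),
          ∫ u in (0:ℝ)..v, X (max (v-u) 0) (f (max u 0))
        set s' := max (t + (θ:ℝ)) 0 with hs'
        have hs'0 : (0:ℝ) ≤ s' := le_max_right _ _
        have hs't : s' ≤ t := max_le (by linarith [θ.2.2]) ht
        rw [← intervalIntegral.integral_add_adjacent_intervals (a := (0:ℝ)) (b := s') (c := t)
          (hc1.intervalIntegrable _ _) (hc1.intervalIntegrable _ _)]
        have hz2 : ∫ u in s'..t, Φ u θ = 0 := by
          have heq : Set.EqOn (fun u => Φ u θ) (fun _ => (0 : Fin n → 𝕜)) (Set.uIcc s' t) := by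
            intro u hu
            rw [Set.uIcc_of_le hs't] at hu
            show Φ u θ = 0
            rw [hΦapp u θ, max_eq_right
              (by linarith [hu.1, le_max_left (t + (θ:ℝ)) (0:ℝ)] : t + (θ:ℝ) - u ≤ 0),
              intervalIntegral.integral_same]
            simp
          rw [intervalIntegral.integral_congr heq, intervalIntegral.integral_zero]
        rw [hz2, add_zero]
        have hfirst : ∫ u in (0:ℝ)..s', Φ u θ
            = ∫ u in (0:ℝ)..s', (∫ s in (0:ℝ)..(s'-u), X (max s 0)) (f (max u 0)) := by
          refine intervalIntegral.integral_congr fun u hu => ?_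
          rw [Set.uIcc_of_le hs'0] at hu
          have hmax : max (t + (θ:ℝ) - u) 0 = s' - u := by
            rcases le_total (t + (θ:ℝ)) 0 with h | h
            · have h0 : s' = 0 := max_eq_right h
              have hu0 : u = 0 := le_antisymm (h0 ▸ hu.2) hu.1
              rw [hu0, h0, sub_zero, sub_zero]
              exact max_eq_right h
            · have h1 : s' = t + (θ:ℝ) := max_eq_left h
              have hu2 := hu.2
              rw [h1] at hu2
              rw [h1]
              exact max_eq_left (by linarith)
          rw [hΦapp u θ, hmax]
        rw [hfirst]
        exact (aux_fubini (fun s => X (max s 0)) hXtc (fun u => f (max u 0)) hftc hs'0).symm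
      rw [hstep1, hstep2, zero_add, add_comm (L _)]
      congr 1
      refine intervalIntegral.integral_congr fun u hu => ?_
      rw [Set.uIcc_of_le ht] at hu
      rw [max_eq_left hu.1]
  refine ⟨hsol, ?_⟩
  intro x' hx' t0 ht0
  obtain ⟨hx'neg, hx'0, hx'c, hx'eq⟩ := hx'
  obtain ⟨-, -, -, hxeqs⟩ := hsol
  have hx'Icc : ∀ s ∈ Set.Icc (-r) (0:ℝ), x' s = 0 := by
    intro s hs
    rcases lt_or_eq_of_le hs.2 with h | h
    · exact hx'neg s ⟨hs.1, h⟩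
    · rw [h]; exact hx'0
  have hyIcc : ∀ s ∈ Set.Icc (-r) (0:ℝ), x' s - x s = 0 := fun s hs => by
    rw [hx'Icc s hs, hxIcc s hs, sub_zero]
  have hyc : ContinuousOn (fun s => x' s - x s) (Set.Ici (0:ℝ)) := hx'c.sub hxc
  have hyint := aux_vanish_integrable hyIcc hyc
  have hx'int := aux_vanish_integrable hx'Icc hx'c
  have hnytc : Continuous fun v => ‖x' (max v 0) - x (max v 0)‖ :=
    ((hx'c.comp_continuous (continuous_id.max continuous_const) fun s => Set.mem_Ici.mpr (le_max_right _ _)).sub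
      (hxc.comp_continuous (continuous_id.max continuous_const) fun s => Set.mem_Ici.mpr (le_max_right _ _))).norm
  have hgnn : ∀ s, 0 ≤ s → 0 ≤ ∫ v in (0:ℝ)..s, ‖x' (max v 0) - x (max v 0)‖ := fun s hs =>
    intervalIntegral.integral_nonneg hs fun v _ => norm_nonneg _
  have key : ∀ s, 0 ≤ s →
      ‖x' s - x s‖ ≤ ‖L‖ * ∫ v in (0:ℝ)..s, ‖x' (max v 0) - x (max v 0)‖ := by
    intro s hs
    obtain ⟨ψ', hψ'1, hψ'2⟩ := hx'eq s hs
    obtain ⟨ψ, hψ1, hψ2⟩ := hxeqs s hs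
    have hys : x' s - x s = L (ψ' - ψ) := by
      rw [hψ'2, hψ2, map_sub]; abel
    rw [hys]
    refine (L.le_opNorm _).trans (mul_le_mul_of_nonneg_left ?_ (norm_nonneg L))
    rw [ContinuousMap.norm_le _ (hgnn s hs)]
    intro θ
    have hsub : (ψ' - ψ) θ = ∫ v in (θ:ℝ)..(s + (θ:ℝ)), (x' v - x v) := by
      rw [ContinuousMap.sub_apply, hψ'1 θ, hψ1 θ,
        ← intervalIntegral.integral_sub
          (hx'int (θ:ℝ) (s + (θ:ℝ)) θ.2.1 (by linarith [θ.2.2]))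
          (hxint (θ:ℝ) (s + (θ:ℝ)) θ.2.1 (by linarith [θ.2.2]))]
    rw [hsub, aux_vanish_shift hyIcc hyint θ.2 hs]
    have hb'0 : (0:ℝ) ≤ max (s + (θ:ℝ)) 0 := le_max_right _ _
    have hb's : max (s + (θ:ℝ)) 0 ≤ s := max_le (by linarith [θ.2.2]) hs
    have hcongr : ∫ v in (0:ℝ)..(max (s + (θ:ℝ)) 0), (x' v - x v)
        = ∫ v in (0:ℝ)..(max (s + (θ:ℝ)) 0), (x' (max v 0) - x (max v 0)) := by
      refine intervalIntegral.integral_congr fun v hv => ?_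
      rw [Set.uIcc_of_le hb'0] at hv
      rw [max_eq_left hv.1]
    rw [hcongr]
    refine (intervalIntegral.norm_integral_le_integral_norm hb'0).trans ?_
    exact intervalIntegral.integral_mono_interval le_rfl hb'0 hb's
      (Filter.Eventually.of_forall fun v => norm_nonneg _) (hnytc.intervalIntegrable _ _)
  have hgd : ∀ s : ℝ, HasDerivAt (fun w => ∫ v in (0:ℝ)..w, ‖x' (max v 0) - x (max v 0)‖)
      (‖x' (max s 0) - x (max s 0)‖) s := fun s =>
    (hnytc.integral_hasStrictDerivAt 0 s).hasDerivAt
  have hgb := norm_le_gronwallBound_of_norm_deriv_right_le (a := 0) (b := t0) (δ := 0)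
    (K := ‖L‖) (ε := 0)
    (f := fun w => ∫ v in (0:ℝ)..w, ‖x' (max v 0) - x (max v 0)‖)
    (f' := fun s => ‖x' (max s 0) - x (max s 0)‖)
    (fun s _ => (hgd s).continuousAt.continuousWithinAt)
    (fun s _ => (hgd s).hasDerivWithinAt)
    (by simp)
    (fun s hs => by
      rw [Real.norm_eq_abs, abs_of_nonneg (norm_nonneg _), Real.norm_eq_abs,
        abs_of_nonneg (hgnn s hs.1), add_zero]
      have hk := key s hs.1
      rw [max_eq_left hs.1]
      exact hk)
  have hgt0 : (∫ v in (0:ℝ)..t0, ‖x' (max v 0) - x (max v 0)‖) = 0 := by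
    have h := hgb t0 ⟨ht0, le_rfl⟩
    rw [gronwallBound_ε0_δ0, Real.norm_eq_abs] at h
    exact le_antisymm ((le_abs_self _).trans h) (hgnn t0 ht0)
  have hfin := key t0 ht0
  rw [hgt0, mul_zero] at hfin
  exact sub_eq_zero.mp (norm_le_zero_iff.mp hfin)
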